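/- Let $p, n \ge 1$, let $S \in \mathbb{R}^{n \times p}$ and $S_* \in \mathbb{R}^{1 \times p}$, let $K \in \mathbb{R}^{p \times n}$, let $L \in \mathbb{R}^{1 \times n}$ satisfy $L\mathbf{1} = 1$ where $\mathbf{1} \in \mathbb{R}^n$ is the all-ones vector. Let $\eta, \hat{\eta}_{pred} \in \mathbb{R}^p$, $\mu, \xi_* \in \mathbb{R}$, $v \in \mathbb{R}^n$, $\epsilon_* \in \mathbb{R}^n$, and let the state estimate be $\hat{\eta} = \hat{\eta}_{pred} + K(S(\eta - \hat{\eta}_{pred}) + v)$, the query-area output be $z^{s_*} = \mathbf{1}(\mu + S_*\eta + \xi_*) + \epsilon_*$, the fine-scale estimate be $\hat{\xi}_* = L(z^{s_*} - \mathbf{1}\mu - \mathbf{1}S_*\hat{\eta}_{pred})$, the true attribute be $q = \mu + S_*\eta + \xi_*$, and the estimate be $\hat{q} = \mu + S_*\hat{\eta} + \hat{\xi}_*$. Then, writing $\tilde{\eta}_{pred} = \eta - \hat{\eta}_{pred}$, the estimation error satisfies $q - \hat{q} = -S_* K S \tilde{\eta}_{pred} - S_* K v - L \epsilon_*$. -/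
import Mathlib

open Matrix

/-- Estimation-error identity (equation (17) of the paper) for the query-area
attribute of the FRRF: with unbiased fine-scale gain (`L 𝟏 = 1`), the error
`q - q̂` equals `-S_* K S η̃_pred - S_* K v - L ε_*`. -/
theorem stmt_10 {p n : ℕ} (hp : 1 ≤ p) (hn : 1 ≤ n)
    (S : Matrix (Fin n) (Fin p) ℝ) (Sstar : Fin p → ℝ)
    (K : Matrix (Fin p) (Fin n) ℝ) (L : Fin n → ℝ)
    (ones : Fin n → ℝ) (hones : ones = fun _ => 1)
    (hL : L ⬝ᵥ ones = 1)
    (η ηpred : Fin p → ℝ) (μ ξstar : ℝ) (v εstar : Fin n → ℝ)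
    (ηhat : Fin p → ℝ)
    (hηhat : ηhat = ηpred + K *ᵥ (S *ᵥ (η - ηpred) + v))
    (zstar : Fin n → ℝ)
    (hzstar : zstar = (μ + Sstar ⬝ᵥ η + ξstar) • ones + εstar)
    (ξhat : ℝ)
    (hξhat : ξhat = L ⬝ᵥ (zstar - μ • ones - (Sstar ⬝ᵥ ηpred) • ones))
    (q : ℝ) (hq : q = μ + Sstar ⬝ᵥ η + ξstar)
    (qhat : ℝ) (hqhat : qhat = μ + Sstar ⬝ᵥ ηhat + ξhat) :
    q - qhat = -(Sstar ⬝ᵥ (K *ᵥ (S *ᵥ (η - ηpred))))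
      - Sstar ⬝ᵥ (K *ᵥ v) - L ⬝ᵥ εstar := by
  subst hηhat hzstar hq hqhat hξhat
  simp [dotProduct_add, dotProduct_sub, mulVec_add, dotProduct_smul, hL, smul_eq_mul]
  ring
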